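/- Let λ₁ ≥ λ₂ ≥ ... ≥ λ_d > 0 be reals all at least 1, and let r ≤ d. Then the choice of r indices maximizing the sum of g(λ_i) over the chosen indices is the set of the r largest values, where g(λ) = (1/2)(ln λ − 1 + 1/λ). Moreover, the same index set maximizes the sum of g(1/λ_i). -/
import Mathlib


noncomputable def g (x : ℝ) : ℝ := (1/2) * (Real.log x - 1 + 1/x)

lemma g_mono {a b : ℝ} (ha : 1 ≤ a) (hab : a ≤ b) : g a ≤ g b := by
  have ha0 : 0 < a := lt_of_lt_of_le one_pos ha
  have hb0 : 0 < b := lt_of_lt_of_le ha0 hab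
  have hlog : Real.log a - Real.log b ≤ a / b - 1 := by
    rw [← Real.log_div (ne_of_gt ha0) (ne_of_gt hb0)]
    exact Real.log_le_sub_one_of_pos (div_pos ha0 hb0)
  have key : 1/a - 1/b ≤ 1 - a/b := by
    have e1 : 1/a - 1/b = (b-a)/(a*b) := by field_simp
    have e2 : 1 - a/b = (b-a)/b := by field_simp
    rw [e1, e2]
    apply div_le_div_of_nonneg_left (by linarith) hb0
    nlinarith
  unfold g
  nlinarith

lemma g_inv_mono {a b : ℝ} (ha : 1 ≤ a) (hab : a ≤ b) : g (1/a) ≤ g (1/b) := by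
  have ha0 : 0 < a := lt_of_lt_of_le one_pos ha
  have hb0 : 0 < b := lt_of_lt_of_le ha0 hab
  have e : ∀ x : ℝ, 0 < x → g (1/x) = (1/2) * (x - 1 - Real.log x) := by
    intro x hx
    unfold g
    rw [Real.log_div one_ne_zero (ne_of_gt hx), Real.log_one]
    field_simp
    ring
  rw [e a ha0, e b hb0]
  have hlog : Real.log b - Real.log a ≤ b/a - 1 := by
    rw [← Real.log_div (ne_of_gt hb0) (ne_of_gt ha0)]
    exact Real.log_le_sub_one_of_pos (div_pos hb0 ha0)
  have : b/a - 1 ≤ b - a := by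
    rw [div_sub_one (ne_of_gt ha0), div_le_iff₀ ha0]
    nlinarith
  nlinarith

lemma strictMono_le {r : ℕ} (f : Fin r → ℕ) (hf : StrictMono f) (k : Fin r) :
    (k : ℕ) ≤ f k := by
  suffices h : ∀ n, ∀ k : Fin r, (k : ℕ) ≤ n → (k : ℕ) ≤ f k from h _ k le_rfl
  intro n
  induction n with
  | zero => intro k hk; omega
  | succ n ih =>
      intro k hk
      by_cases h0 : (k : ℕ) = 0
      · omega
      · have hkd := k.2
        set j : Fin r := ⟨(k : ℕ) - 1, by omega⟩ with hj
        have hv : (j : ℕ) = (k : ℕ) - 1 := rfl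
        have hjk : j < k := by rw [Fin.lt_def]; omega
        have h1 := ih j (by omega)
        have h2 := hf hjk
        omega

lemma sum_le_top {d r : ℕ} (hr : r ≤ d) (F : Fin d → ℝ)
    (hF : ∀ i j : Fin d, i ≤ j → F j ≤ F i)
    (s : Finset (Fin d)) (hs : s.card = r) :
    (∑ i ∈ s, F i) ≤ ∑ i ∈ Finset.univ.filter (fun i : Fin d => (i : ℕ) < r), F i := by
  rcases Nat.eq_zero_or_pos r with hr0 | hr0
  · subst hr0
    rw [Finset.card_eq_zero.mp hs]
    simp
  have hL : (∑ i ∈ s, F i) = ∑ k : Fin r, F (s.orderIsoOfFin hs k) := by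
    rw [← Finset.sum_attach s F]
    exact (Fintype.sum_equiv (s.orderIsoOfFin hs).toEquiv _ _ (fun k => rfl)).symm
  have hR : (∑ i ∈ Finset.univ.filter (fun i : Fin d => (i : ℕ) < r), F i)
      = ∑ k : Fin r, F (Fin.castLE hr k) := by
    refine Finset.sum_nbij' (fun i => ⟨(i : ℕ) % r, Nat.mod_lt _ hr0⟩)
      (fun k => Fin.castLE hr k) ?_ ?_ ?_ ?_ ?_
    all_goals intro a ha <;> simp_all [Fin.ext_iff, Nat.mod_eq_of_lt]
  rw [hL, hR]
  apply Finset.sum_le_sum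
  intro k _
  apply hF
  have hsm : StrictMono (fun k : Fin r => ((s.orderIsoOfFin hs k : Fin d) : ℕ)) := by
    intro a b hab
    exact_mod_cast (s.orderIsoOfFin hs).strictMono hab
  have := strictMono_le _ hsm k
  exact Fin.le_def.2 (by simpa using this)

theorem top_r_maximize (d r : ℕ) (hr : r ≤ d) (lam : Fin d → ℝ)
    (hmono : ∀ i j : Fin d, i ≤ j → lam j ≤ lam i)
    (h1 : ∀ i, 1 ≤ lam i)
    (s : Finset (Fin d)) (hs : s.card = r) :
    (∑ i ∈ s, g (lam i)) ≤
      (∑ i ∈ Finset.univ.filter (fun i : Fin d => (i : ℕ) < r), g (lam i)) ∧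
    (∑ i ∈ s, g (1 / lam i)) ≤
      (∑ i ∈ Finset.univ.filter (fun i : Fin d => (i : ℕ) < r), g (1 / lam i)) := by
  constructor
  · exact sum_le_top hr (fun i => g (lam i))
      (fun i j hij => g_mono (h1 j) (hmono i j hij)) s hs
  · exact sum_le_top hr (fun i => g (1 / lam i))
      (fun i j hij => g_inv_mono (h1 j) (hmono i j hij)) s hs
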